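/- Let X be an operator on H^{⊗N}. If the function ρ ↦ Tr[X ρ^{⊗N}] vanishes for all density operators ρ on H, then the symmetrization (1/N!) ∑_{σ∈S_N} Π_σ X Π_σ† = 0. -/

import Mathlib

/-!
Write `F(ρ₁, …, ρ_N) = Tr[X (ρ₁ ⊗ ⋯ ⊗ ρ_N)]`. This form is multilinear, and its symmetrization,
evaluated at the matrix units `E_{b_i a_i}`, is the `(a, b)` entry of `∑_σ Π_σ X Π_σ†`.
By homogeneity the hypothesis extends from density matrices to all positive semidefinite `A`, i.e.
`F(A, …, A) = 0`. The polarization identity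
`∑_σ F(ρ_{σ 1}, …, ρ_{σ N}) = ∑_S (-1)^{N - |S|} F(ρ_S, …, ρ_S)`, with `ρ_S = ∑_{i ∈ S} ρ_i`,
then shows that the symmetrization of `F` vanishes on tuples of positive semidefinite matrices,
and these span all matrices.
-/

open Matrix BigOperators Finset
open scoped ComplexOrder

/-- N-fold tensor power of a matrix (operator on H^{⊗N} with H = ℂ^d). -/
def tensorPow {d N : ℕ} (ρ : Matrix (Fin d) (Fin d) ℂ) :
    Matrix (Fin N → Fin d) (Fin N → Fin d) ℂ :=
  Matrix.of fun f g => ∏ i, ρ (f i) (g i)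

/-- Conjugation Π_σ X Π_σ† of an operator on H^{⊗N} by the unitary permuting tensor factors. -/
def permAction {d N : ℕ} (σ : Equiv.Perm (Fin N))
    (X : Matrix (Fin N → Fin d) (Fin N → Fin d) ℂ) :
    Matrix (Fin N → Fin d) (Fin N → Fin d) ℂ :=
  Matrix.of fun f g => X (f ∘ σ) (g ∘ σ)

/-- Density operator: positive semidefinite with unit trace. -/
def IsDensity {d : ℕ} (ρ : Matrix (Fin d) (Fin d) ℂ) : Prop :=
  ρ.PosSemidef ∧ ρ.trace = 1

/-- A^{(k)} = I^{⊗(k-1)} ⊗ A ⊗ I^{⊗(N-k)}, the observable A acting on the k-th factor. -/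
noncomputable def siteOp {d N : ℕ} (k : Fin N) (A : Matrix (Fin d) (Fin d) ℂ) :
    Matrix (Fin N → Fin d) (Fin N → Fin d) ℂ :=
  Matrix.of fun f g => A (f k) (g k) * ∏ i ∈ Finset.univ.erase k, (if f i = g i then (1 : ℂ) else 0)

/-- Matrix element ⟨ψ₁|⊗⋯⊗⟨ψ_N| X |φ₁⟩⊗⋯⊗|φ_N⟩ on product vectors. -/
noncomputable def prodElem {d N : ℕ} (X : Matrix (Fin N → Fin d) (Fin N → Fin d) ℂ)
    (ψ φ : Fin N → Fin d → ℂ) : ℂ :=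
  ∑ f : Fin N → Fin d, ∑ g : Fin N → Fin d,
    (starRingEnd ℂ) (∏ i, ψ i (f i)) * X f g * ∏ i, φ i (g i)

theorem Finset.sum_superset_neg_one_pow_card_compl {ι : Type*} [Fintype ι] [DecidableEq ι]
    (T : Finset ι) : ∑ S with T ⊆ S, (-1 : ℤ) ^ #Sᶜ = if T = univ then 1 else 0 := by
  have hcompl : ∑ S with T ⊆ S, (-1 : ℤ) ^ #Sᶜ = ∑ U ∈ Tᶜ.powerset, (-1 : ℤ) ^ #U :=
    sum_nbij' compl compl (by simp) (by simp [subset_compl_comm]) (by simp) (by simp) (by simp)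
  simp [hcompl, sum_powerset_neg_one_pow_card]

theorem Equiv.Perm.sum_eq_sum_surjective {ι M : Type*} [Fintype ι] [DecidableEq ι]
    [AddCommMonoid M] (g : (ι → ι) → M) :
    ∑ σ : Equiv.Perm ι, g σ = ∑ r with Function.Surjective r, g r :=
  sum_bij' (fun σ _ => σ)
    (fun r hr => Equiv.ofBijective r (Finite.surjective_iff_bijective.mp (mem_filter.mp hr).2))
    (fun σ _ => by simpa using σ.surjective) (by simp) (by simp) (fun _ _ => rfl) (by simp)

namespace MultilinearMap

section Symmetrize

variable {R ι M N : Type*} [Semiring R] [AddCommMonoid M] [Module R M] [Fintype ι] [DecidableEq ι]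

def symmetrize [AddCommMonoid N] [Module R N] (f : MultilinearMap R (fun _ : ι => M) N) :
    MultilinearMap R (fun _ : ι => M) N :=
  ∑ σ : Equiv.Perm ι, f.domDomCongr σ

theorem symmetrize_apply [AddCommMonoid N] [Module R N] (f : MultilinearMap R (fun _ : ι => M) N)
    (v : ι → M) : f.symmetrize v = ∑ σ : Equiv.Perm ι, f (v ∘ σ) := by
  simp [symmetrize, Function.comp_def]

theorem symmetrize_apply_eq_sum_neg_one_pow [AddCommGroup N] [Module R N]
    (f : MultilinearMap R (fun _ : ι => M) N) (v : ι → M) :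
    f.symmetrize v = ∑ S : Finset ι, (-1 : ℤ) ^ #Sᶜ • f (fun _ => ∑ i ∈ S, v i) := by
  have hmem_piFinset (S : Finset ι) (r : ι → ι) :
      r ∈ Fintype.piFinset (fun _ => S) ↔ univ.image r ⊆ S := by
    simp [subset_iff]
  symm
  calc ∑ S : Finset ι, (-1 : ℤ) ^ #Sᶜ • f (fun _ => ∑ i ∈ S, v i)
      = ∑ S : Finset ι, ∑ r : ι → ι,
          if univ.image r ⊆ S then (-1 : ℤ) ^ #Sᶜ • f (v ∘ r) else 0 := by
        refine sum_congr rfl fun S _ => ?_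
        rw [f.map_sum_finset, smul_sum, ← sum_filter]
        exact sum_congr (by ext r; simp [hmem_piFinset]) fun _ _ => rfl
    _ = ∑ r : ι → ι, (∑ S with univ.image r ⊆ S, (-1 : ℤ) ^ #Sᶜ) • f (v ∘ r) := by
        rw [sum_comm]
        simp [sum_smul, sum_filter]
    -- inclusion–exclusion over the supersets of the range of `r`
    _ = ∑ r with Function.Surjective r, f (v ∘ r) := by
        rw [sum_filter]
        refine sum_congr rfl fun r _ => ?_
        rw [sum_superset_neg_one_pow_card_compl]
        simp only [eq_univ_iff_forall, mem_image, mem_univ, true_and, ite_smul, one_smul,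
          zero_smul]
        rfl
    _ = f.symmetrize v := by
        rw [symmetrize_apply, Equiv.Perm.sum_eq_sum_surjective fun r => f (v ∘ r)]

end Symmetrize

theorem eq_zero_of_span_eq_top {R ι N : Type*} {M : ι → Type*} [CommSemiring R]
    [∀ i, AddCommMonoid (M i)] [∀ i, Module R (M i)] [AddCommMonoid N] [Module R N] [Fintype ι]
    [DecidableEq ι] (f : MultilinearMap R M N) {s : ∀ i, Set (M i)}
    (hs : ∀ i, Submodule.span R (s i) = ⊤) (hf : ∀ v : ∀ i, M i, (∀ i, v i ∈ s i) → f v = 0) :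
    f = 0 := by
  ext w
  choose n c x hx using fun i =>
    Submodule.mem_span_set'.mp (hs i ▸ Submodule.mem_top : w i ∈ Submodule.span R (s i))
  have hw : w = fun i => ∑ k, c i k • (x i k : M i) := funext fun i => (hx i).symm
  rw [hw, f.map_sum, _root_.zero_apply]
  refine sum_eq_zero fun r _ => ?_
  rw [f.map_smul_univ, hf _ fun i => (x i (r i)).2, smul_zero]

end MultilinearMap

namespace Matrix

variable {ι n R : Type*} [Fintype ι] [CommSemiring R]

def piKronecker : MultilinearMap R (fun _ : ι => Matrix n n R) (Matrix (ι → n) (ι → n) R) :=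
  MultilinearMap.pi fun f => MultilinearMap.pi fun g =>
    (MultilinearMap.mkPiAlgebra R ι R).compLinearMap fun i => entryLinearMap R R (f i) (g i)

@[simp]
theorem piKronecker_apply (ρ : ι → Matrix n n R) (f g : ι → n) :
    piKronecker ρ f g = ∏ i, ρ i (f i) (g i) :=
  rfl

theorem piKronecker_single [DecidableEq n] (a b : ι → n) :
    piKronecker (fun i => single (a i) (b i) (1 : R)) = single a b 1 := by
  ext f g
  simp [single_apply, prod_boole, funext_iff, forall_and]

theorem tensorPow_eq_piKronecker {d N : ℕ} (ρ : Matrix (Fin d) (Fin d) ℂ) :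
    tensorPow (N := N) ρ = piKronecker fun _ => ρ := by
  ext f g
  simp [tensorPow]

theorem span_posSemidef {n : Type*} [Fintype n] [DecidableEq n] :
    Submodule.span ℂ {A : Matrix n n ℂ | A.PosSemidef} = ⊤ := by
  open scoped Matrix.Norms.L2Operator MatrixOrder in
  simpa [nonneg_iff_posSemidef] using CStarAlgebra.span_nonneg (A := Matrix n n ℂ)

end Matrix

theorem isDensity_inv_trace_smul {d : ℕ} {A : Matrix (Fin d) (Fin d) ℂ} (hA : A.PosSemidef)
    (h0 : A ≠ 0) : IsDensity (A.trace⁻¹ • A) := by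
  have htr : A.trace ≠ 0 := fun h => h0 (hA.trace_eq_zero_iff.mp h)
  exact ⟨hA.smul (inv_nonneg.mpr hA.trace_nonneg), by simp [trace_smul, htr]⟩

theorem MultilinearMap.apply_const_eq_zero_of_posSemidef {ι N : Type*} [Fintype ι] [Nonempty ι]
    [AddCommMonoid N] [Module ℂ N] {d : ℕ}
    (f : MultilinearMap ℂ (fun _ : ι => Matrix (Fin d) (Fin d) ℂ) N)
    (hf : ∀ ρ, IsDensity ρ → f (fun _ => ρ) = 0) {A : Matrix (Fin d) (Fin d) ℂ}
    (hA : A.PosSemidef) : f (fun _ => A) = 0 := by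
  rcases eq_or_ne A 0 with rfl | h0
  · exact f.map_zero
  · have hA' : A = A.trace • (A.trace⁻¹ • A) := by
      rw [smul_smul, mul_inv_cancel₀ fun h => h0 (hA.trace_eq_zero_iff.mp h), one_smul]
    rw [hA', f.map_smul_univ (fun _ => A.trace) (fun _ => A.trace⁻¹ • A),
      hf _ (isDensity_inv_trace_smul hA h0), smul_zero]

/-- If Tr[X ρ^{⊗N}] = 0 for all density operators ρ, then the symmetrization
(1/N!)∑_σ Π_σ X Π_σ† of X vanishes. -/
theorem symmetrization_eq_zero_of_averages_vanish
    {d N : ℕ} (hN : 0 < N)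
    (X : Matrix (Fin N → Fin d) (Fin N → Fin d) ℂ)
    (h : ∀ ρ : Matrix (Fin d) (Fin d) ℂ, IsDensity ρ → (X * tensorPow ρ).trace = 0) :
    (N.factorial : ℂ)⁻¹ • ∑ σ : Equiv.Perm (Fin N), permAction σ X = 0 := by
  have : Nonempty (Fin N) := ⟨⟨0, hN⟩⟩
  let F := (traceLinearMap _ ℂ ℂ ∘ₗ LinearMap.mulLeft ℂ X).compMultilinearMap piKronecker
  have hF (ρ : Matrix (Fin d) (Fin d) ℂ) (hρ : IsDensity ρ) : F (fun _ => ρ) = 0 := by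
    simpa [F, tensorPow_eq_piKronecker] using h ρ hρ
  have hsym : F.symmetrize = 0 :=
    F.symmetrize.eq_zero_of_span_eq_top (fun _ => span_posSemidef) fun v hv => by
      rw [MultilinearMap.symmetrize_apply_eq_sum_neg_one_pow]
      refine sum_eq_zero fun S _ => ?_
      rw [F.apply_const_eq_zero_of_posSemidef hF (posSemidef_sum S fun i _ => hv i), smul_zero]
  have hentry (a b : Fin N → Fin d) : (∑ σ : Equiv.Perm (Fin N), permAction σ X) a b =
      F.symmetrize fun i => single (b i) (a i) 1 := by
    simp [F, MultilinearMap.symmetrize_apply, Function.comp_def, piKronecker_single,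
      trace_mul_single, permAction, Matrix.sum_apply]
  ext a b
  simp [hentry, hsym]
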